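/- Let G be a digraph with at least one arc in which every vertex has positive outdegree. Then q(G) ≤ max over arcs (v_i,v_j) of ( d_i^+(sqrt(d_i^+) + sqrt(m_i^+)) + d_j^+(sqrt(d_j^+) + sqrt(m_j^+)) ) / ( sqrt(d_i^+) + sqrt(d_j^+) ). -/

import Mathlib

open Matrix Finset

/-- Spectral radius of a complex square matrix: the largest modulus of its eigenvalues. -/
noncomputable def specRad {n : ℕ} (M : Matrix (Fin n) (Fin n) ℂ) : ℝ :=
  sSup {x : ℝ | ∃ μ ∈ spectrum ℂ M, x = ‖μ‖}

/-- Spectral radius of a real square matrix (via its complex eigenvalues). -/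
noncomputable def specRadR {n : ℕ} (M : Matrix (Fin n) (Fin n) ℝ) : ℝ :=
  specRad (M.map Complex.ofReal)

/-- Adjacency matrix of a digraph given by its arc relation. -/
def adjM {n : ℕ} (E : Fin n → Fin n → Prop) [DecidableRel E] :
    Matrix (Fin n) (Fin n) ℝ := fun i j => if E i j then 1 else 0

/-- Outdegree of vertex `i`. -/
def outdeg {n : ℕ} (E : Fin n → Fin n → Prop) [DecidableRel E] (i : Fin n) : ℕ :=
  (Finset.univ.filter (fun j => E i j)).card

/-- Signless Laplacian `Q(G) = D(G) + A(G)`. -/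
noncomputable def Qmat {n : ℕ} (E : Fin n → Fin n → Prop) [DecidableRel E] :
    Matrix (Fin n) (Fin n) ℝ :=
  Matrix.diagonal (fun i => (outdeg E i : ℝ)) + adjM E

/-- Signless Laplacian spectral radius `q(G)`. -/
noncomputable def qG {n : ℕ} (E : Fin n → Fin n → Prop) [DecidableRel E] : ℝ :=
  specRadR (Qmat E)

/-- Average 2-outdegree `m_i^+`. -/
noncomputable def m2 {n : ℕ} (E : Fin n → Fin n → Prop) [DecidableRel E] (i : Fin n) : ℝ :=
  (∑ j ∈ Finset.univ.filter (fun j => E i j), (outdeg E j : ℝ)) / (outdeg E i : ℝ)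

/-- The finset of arcs of the digraph. -/
def arcs {n : ℕ} (E : Fin n → Fin n → Prop) [DecidableRel E] : Finset (Fin n × Fin n) :=
  Finset.univ.filter (fun p => E p.1 p.2)

/-- Strong connectivity of a digraph. -/
def StrongConn {n : ℕ} (E : Fin n → Fin n → Prop) : Prop :=
  ∀ i j : Fin n, Relation.ReflTransGen E i j

/-- Irreducibility of a square matrix: the digraph of nonzero entries is strongly connected. -/
def MatIrred {n : ℕ} {α : Type*} [Zero α] (M : Matrix (Fin n) (Fin n) α) : Prop :=
  ∀ i j : Fin n, i ≠ j → Relation.TransGen (fun a b => M a b ≠ 0) i j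

/-! For an eigenvector `v` of `Q` with eigenvalue `μ`, row `i` of `Q v = μ v` reads
`μ v i = ∑_{k ∈ N⁺ i} (v i + v k)`, so the arc sums `z (i, j) = v i + v j` satisfy
`μ z (i, j) = ∑_{k ∈ N⁺ i} z (i, k) + ∑_{k ∈ N⁺ j} z (j, k)`. Given any weight `f` positive on
arcs, evaluating this at an arc `(i, j)` maximising `‖z‖ / f` gives
`‖μ‖ ≤ (∑_{k ∈ N⁺ i} f i k + ∑_{k ∈ N⁺ j} f j k) / f i j` (if `z` vanishes on all arcs, then
`μ v = 0` and `μ = 0`). For `f i j = √d_i + √d_j`, Cauchy–Schwarz bounds `∑_{k ∈ N⁺ i} √d_k`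
by `√(d_i ∑_{k ∈ N⁺ i} d_k) = d_i √m_i`. -/

lemma Matrix.exists_mulVec_eq_smul_of_mem_spectrum {ι K : Type*} [Fintype ι] [DecidableEq ι]
    [Field K] {A : Matrix ι ι K} {μ : K} (hμ : μ ∈ spectrum K A) :
    ∃ v, v ≠ 0 ∧ A *ᵥ v = μ • v := by
  rw [← Matrix.spectrum_toLin'] at hμ
  obtain ⟨v, hv, hv0⟩ := (Module.End.HasEigenvalue.of_mem_spectrum hμ).exists_hasEigenvector
  exact ⟨v, hv0, by simpa using Module.End.mem_eigenspace_iff.mp hv⟩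

def outNbhd {n : ℕ} (E : Fin n → Fin n → Prop) [DecidableRel E] (i : Fin n) : Finset (Fin n) :=
  univ.filter (E i)

noncomputable def weightedArcRatio {n : ℕ} (E : Fin n → Fin n → Prop) [DecidableRel E]
    (f : Fin n → Fin n → ℝ) (p : Fin n × Fin n) : ℝ :=
  (∑ k ∈ outNbhd E p.1, f p.1 k + ∑ k ∈ outNbhd E p.2, f p.2 k) / f p.1 p.2

section Digraph

variable {n : ℕ} (E : Fin n → Fin n → Prop) [DecidableRel E]

lemma mem_outNbhd {i j : Fin n} : j ∈ outNbhd E i ↔ E i j := by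
  simp [outNbhd]

lemma mem_arcs {p : Fin n × Fin n} : p ∈ arcs E ↔ E p.1 p.2 := by
  simp [arcs]

lemma card_outNbhd (i : Fin n) : (outNbhd E i).card = outdeg E i := rfl

lemma outdeg_pos {i j : Fin n} (h : E i j) : 0 < outdeg E i :=
  card_pos.mpr ⟨j, (mem_outNbhd E).mpr h⟩

lemma Qmat_map_mulVec_apply (v : Fin n → ℂ) (i : Fin n) :
    ((Qmat E).map Complex.ofReal *ᵥ v) i = ∑ k ∈ outNbhd E i, (v i + v k) := by
  simp only [mulVec, dotProduct, map_apply, Qmat, adjM, Matrix.add_apply, diagonal_apply,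
    apply_ite Complex.ofReal, Complex.ofReal_add, Complex.ofReal_natCast, Complex.ofReal_zero,
    Complex.ofReal_one, add_mul, ite_mul, zero_mul, one_mul, sum_add_distrib, sum_ite_eq,
    mem_univ, if_true]
  rw [sum_const, card_outNbhd, nsmul_eq_mul, outNbhd, sum_filter]

lemma outdeg_mul_m2 (i : Fin n) :
    (outdeg E i : ℝ) * m2 E i = ∑ k ∈ outNbhd E i, (outdeg E k : ℝ) := by
  rcases eq_or_ne (outdeg E i) 0 with h | h
  · have : outNbhd E i = ∅ := card_eq_zero.mp h
    simp [h, this]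
  · exact mul_div_cancel₀ _ (Nat.cast_ne_zero.mpr h)

lemma sum_sqrt_outdeg_le (i : Fin n) :
    ∑ k ∈ outNbhd E i, √(outdeg E k : ℝ) ≤ outdeg E i * √(m2 E i) := by
  calc ∑ k ∈ outNbhd E i, √(outdeg E k : ℝ) = ∑ k ∈ outNbhd E i, √1 * √(outdeg E k : ℝ) := by
        simp
    _ ≤ √(∑ k ∈ outNbhd E i, (1 : ℝ)) * √(∑ k ∈ outNbhd E i, (outdeg E k : ℝ)) :=
        Real.sum_sqrt_mul_sqrt_le _ (fun _ => zero_le_one) (fun _ => by positivity)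
    _ = √(outdeg E i : ℝ) * √(outdeg E i * m2 E i) := by
        rw [outdeg_mul_m2]; simp [outNbhd, outdeg]
    _ = outdeg E i * √(m2 E i) := by
        rw [Real.sqrt_mul (by positivity), ← mul_assoc, Real.mul_self_sqrt (by positivity)]

lemma sum_sqrt_outdeg_add_le (i : Fin n) :
    ∑ k ∈ outNbhd E i, (√(outdeg E i : ℝ) + √(outdeg E k : ℝ)) ≤
      outdeg E i * (√(outdeg E i : ℝ) + √(m2 E i)) := by
  rw [sum_add_distrib, sum_const, card_outNbhd, nsmul_eq_mul, mul_add]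
  exact add_le_add le_rfl (sum_sqrt_outdeg_le E i)

variable (f : Fin n → Fin n → ℝ)

lemma weightedArcRatio_nonneg (hf : ∀ i j, E i j → 0 < f i j) {p : Fin n × Fin n}
    (hp : p ∈ arcs E) : 0 ≤ weightedArcRatio E f p := by
  have hsum (i : Fin n) : 0 ≤ ∑ k ∈ outNbhd E i, f i k :=
    sum_nonneg fun k hk => (hf i k ((mem_outNbhd E).mp hk)).le
  exact div_nonneg (add_nonneg (hsum p.1) (hsum p.2)) (hf _ _ ((mem_arcs E).mp hp)).le

theorem norm_le_of_mem_spectrum_Qmat (hf : ∀ i j, E i j → 0 < f i j)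
    (harcs : (arcs E).Nonempty) {μ : ℂ} (hμ : μ ∈ spectrum ℂ ((Qmat E).map Complex.ofReal)) :
    ‖μ‖ ≤ (arcs E).sup' harcs (weightedArcRatio E f) := by
  obtain ⟨v, hv0, hv⟩ := Matrix.exists_mulVec_eq_smul_of_mem_spectrum hμ
  have heigen (i : Fin n) : μ * v i = ∑ k ∈ outNbhd E i, (v i + v k) := by
    rw [← Qmat_map_mulVec_apply, hv, Pi.smul_apply, smul_eq_mul]
  obtain ⟨p, hp, hmax⟩ :=
    (arcs E).exists_max_image (fun q => ‖v q.1 + v q.2‖ / f q.1 q.2) harcs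
  set t := ‖v p.1 + v p.2‖ / f p.1 p.2
  have hfp : 0 < f p.1 p.2 := hf _ _ ((mem_arcs E).mp hp)
  have hz (i k : Fin n) (hk : k ∈ outNbhd E i) : ‖v i + v k‖ ≤ t * f i k :=
    (div_le_iff₀ (hf i k ((mem_outNbhd E).mp hk))).mp
      (hmax (i, k) ((mem_arcs E).mpr ((mem_outNbhd E).mp hk)))
  have hrow (i : Fin n) : ‖μ * v i‖ ≤ t * ∑ k ∈ outNbhd E i, f i k := by
    rw [heigen, mul_sum]
    exact (norm_sum_le _ _).trans (sum_le_sum fun k hk => hz i k hk)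
  have hp_le : weightedArcRatio E f p ≤ (arcs E).sup' harcs (weightedArcRatio E f) :=
    le_sup' (weightedArcRatio E f) hp
  rcases (show 0 ≤ t from div_nonneg (norm_nonneg _) hfp.le).eq_or_lt with ht | ht
  · obtain ⟨i, hi⟩ := Function.ne_iff.mp hv0
    have : μ * v i = 0 := norm_le_zero_iff.mp (by simpa only [← ht, zero_mul] using hrow i)
    rw [(mul_eq_zero.mp this).resolve_right hi, norm_zero]
    exact (weightedArcRatio_nonneg E f hf hp).trans hp_le
  · refine le_trans ?_ hp_le
    rw [weightedArcRatio, le_div_iff₀ hfp]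
    have hzp : ‖v p.1 + v p.2‖ = t * f p.1 p.2 := (div_mul_cancel₀ _ hfp.ne').symm
    have key : ‖μ‖ * (t * f p.1 p.2) ≤
        t * (∑ k ∈ outNbhd E p.1, f p.1 k + ∑ k ∈ outNbhd E p.2, f p.2 k) := by
      rw [← hzp, ← norm_mul, mul_add, mul_add]
      exact (norm_add_le _ _).trans (add_le_add (hrow p.1) (hrow p.2))
    nlinarith

theorem qG_le_sup'_weightedArcRatio (hf : ∀ i j, E i j → 0 < f i j)
    (harcs : (arcs E).Nonempty) :
    qG E ≤ (arcs E).sup' harcs (weightedArcRatio E f) := by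
  refine Real.sSup_le ?_ ?_
  · rintro _ ⟨μ, hμ, rfl⟩
    exact norm_le_of_mem_spectrum_Qmat E f hf harcs hμ
  · obtain ⟨p, hp⟩ := harcs
    exact (weightedArcRatio_nonneg E f hf hp).trans (le_sup' _ hp)

end Digraph

theorem stmt_12_general {n : ℕ} (E : Fin n → Fin n → Prop) [DecidableRel E]
    (harcs : (arcs E).Nonempty) :
    qG E ≤ (arcs E).sup' harcs (fun p =>
      ((outdeg E p.1 : ℝ) * (Real.sqrt (outdeg E p.1 : ℝ) + Real.sqrt (m2 E p.1)) +
       (outdeg E p.2 : ℝ) * (Real.sqrt (outdeg E p.2 : ℝ) + Real.sqrt (m2 E p.2))) /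
        (Real.sqrt (outdeg E p.1 : ℝ) + Real.sqrt (outdeg E p.2 : ℝ))) := by
  set c : Fin n → ℝ := fun i => √(outdeg E i : ℝ)
  have hc (i j : Fin n) (hij : E i j) : 0 < c i + c j :=
    add_pos_of_pos_of_nonneg (Real.sqrt_pos.mpr (Nat.cast_pos.mpr (outdeg_pos E hij)))
      (Real.sqrt_nonneg _)
  refine (qG_le_sup'_weightedArcRatio E (fun i j => c i + c j) hc harcs).trans
    (sup'_mono_fun fun p hp => ?_)
  exact div_le_div_of_nonneg_right (add_le_add (sum_sqrt_outdeg_add_le E p.1)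
    (sum_sqrt_outdeg_add_le E p.2)) (hc _ _ ((mem_arcs E).mp hp)).le

/-- `q(G) ≤ max over arcs of
(d_i⁺(√d_i⁺+√m_i⁺)+d_j⁺(√d_j⁺+√m_j⁺))/(√d_i⁺+√d_j⁺)`. -/
theorem stmt_12 {n : ℕ} (E : Fin n → Fin n → Prop) [DecidableRel E]
    (hloop : ∀ i, ¬ E i i) (hdeg : ∀ i, 0 < outdeg E i) (harcs : (arcs E).Nonempty) :
    qG E ≤ (arcs E).sup' harcs (fun p =>
      ((outdeg E p.1 : ℝ) * (Real.sqrt (outdeg E p.1 : ℝ) + Real.sqrt (m2 E p.1)) +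
       (outdeg E p.2 : ℝ) * (Real.sqrt (outdeg E p.2 : ℝ) + Real.sqrt (m2 E p.2))) /
        (Real.sqrt (outdeg E p.1 : ℝ) + Real.sqrt (outdeg E p.2 : ℝ))) :=
  stmt_12_general E harcs
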